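/- For every a ∈ ℤ one has SA_{a,1} ≅ SA_{0,1} as Neveu–Schwarz modules. Moreover, the subspace SA'_{0,1} of SA_{0,1} spanned by {x_j : j ∈ ℤ, j ≠ 0} ∪ {y_{j+1/2} : j ∈ ℤ} is a submodule of SA_{0,1}, it is simple, and it is the unique simple submodule of SA_{0,1}. -/

import Mathlib

/-!
The basis vectors `x j`, `y_{j+1/2}` of `SA_{a,b}` are `L 0`-eigenvectors with the pairwise
distinct eigenvalues `a + j`, `a + 1/2 + j`, so every nonzero submodule contains a basis vector.
Shifting all indices by `n ∈ ℤ` intertwines the actions on `SA_{a'+n,b}` and `SA_{a',b}`.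
In `SA_{0,1}` one has `G_{k-j+1/2} x_j = y_{k+1/2}` and `G_{m-j-1/2} y_{j+1/2} = m x_m`, so any
basis vector generates all basis vectors except `x_0`, which is never reached (`L_{-j} x_j = 0`):
hence `SA'_{0,1}` is contained in every nonzero submodule and is itself one.
-/

noncomputable section

open Submodule

/-- The underlying data of a `ℤ/2`-graded complex vector space equipped with
operators `L m` (`m ∈ ℤ`) and `G k` (`k ∈ ℤ`, where `G k` represents the
operator `G_{k+1/2}` indexed by the half-integer `k + 1/2`). -/
structure PreNSMod where
  carrier : Type
  [acg : AddCommGroup carrier]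
  [mod : Module ℂ carrier]
  even : Submodule ℂ carrier
  odd : Submodule ℂ carrier
  compl : IsCompl even odd
  L : ℤ → carrier →ₗ[ℂ] carrier
  G : ℤ → carrier →ₗ[ℂ] carrier

attribute [instance] PreNSMod.acg PreNSMod.mod

/-- A Neveu–Schwarz module of central charge `c`. -/
structure NSMod (c : ℂ) extends PreNSMod where
  mapsL_even : ∀ (m : ℤ), ∀ v ∈ even, L m v ∈ even
  mapsL_odd : ∀ (m : ℤ), ∀ v ∈ odd, L m v ∈ odd
  mapsG_even : ∀ (k : ℤ), ∀ v ∈ even, G k v ∈ odd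
  mapsG_odd : ∀ (k : ℤ), ∀ v ∈ odd, G k v ∈ even
  rel_LL : ∀ (m n : ℤ) (v : carrier),
    L m (L n v) - L n (L m v)
      = ((n : ℂ) - (m : ℂ)) • L (m + n) v
        + (if m + n = 0 then (((m : ℂ) ^ 3 - (m : ℂ)) / 12) * c else 0) • v
  rel_LG : ∀ (m k : ℤ) (v : carrier),
    L m (G k v) - G k (L m v) = (((k : ℂ) + 1 / 2) - (m : ℂ) / 2) • G (m + k) v
  rel_GG : ∀ (k l : ℤ) (v : carrier),
    G k (G l v) + G l (G k v)
      = (2 : ℂ) • L (k + l + 1) v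
        - (if k + l + 1 = 0 then (1 / 3) * (((k : ℂ) + 1 / 2) ^ 2 - 1 / 4) * c else 0) • v

/-- A submodule (invariant subspace) of a Neveu–Schwarz module. -/
def NSMod.IsSubmodule {c : ℂ} (S : NSMod c) (W : Submodule ℂ S.carrier) : Prop :=
  (∀ (m : ℤ), ∀ v ∈ W, S.L m v ∈ W) ∧ (∀ (k : ℤ), ∀ v ∈ W, S.G k v ∈ W)

/-- Simplicity (irreducibility) of a Neveu–Schwarz module. -/
def NSMod.IsSimple {c : ℂ} (S : NSMod c) : Prop :=
  (∃ v : S.carrier, v ≠ 0) ∧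
    ∀ W : Submodule ℂ S.carrier, S.IsSubmodule W → W = ⊥ ∨ W = ⊤

/-- `W` is a nonzero submodule which is simple as a module (it has no invariant
subspaces other than `⊥` and itself). -/
def NSMod.IsSimpleSubmodule {c : ℂ} (S : NSMod c) (W : Submodule ℂ S.carrier) : Prop :=
  S.IsSubmodule W ∧ W ≠ ⊥ ∧
    ∀ W' : Submodule ℂ S.carrier, S.IsSubmodule W' → W' ≤ W → W' = ⊥ ∨ W' = W

/-- A homomorphism of Neveu–Schwarz modules: a linear map commuting with all
the operators `L m` and `G k`. -/
structure NSHom {c c' : ℂ} (S : NSMod c) (T : NSMod c') where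
  toFun : S.carrier →ₗ[ℂ] T.carrier
  commL : ∀ (m : ℤ) (v : S.carrier), toFun (S.L m v) = T.L m (toFun v)
  commG : ∀ (k : ℤ) (v : S.carrier), toFun (S.G k v) = T.G k (toFun v)

/-- Two Neveu–Schwarz modules are isomorphic if there is a bijective
homomorphism between them. -/
def NSIso {c c' : ℂ} (S : NSMod c) (T : NSMod c') : Prop :=
  ∃ f : NSHom S T, Function.Bijective f.toFun

/-- A realization of the intermediate series module `SA_{a,b}` inside a
Neveu–Schwarz module `S` of central charge `0`: a basis `x j` (`j ∈ ℤ`, even)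
and `y j` (`j ∈ ℤ`, representing `y_{j+1/2}`, odd) on which the operators act
by the defining formulas of `SA_{a,b}`. -/
structure SAFamily (a b : ℂ) (S : NSMod 0) where
  x : ℤ → S.carrier
  y : ℤ → S.carrier
  x_even : ∀ j : ℤ, x j ∈ S.even
  y_odd : ∀ j : ℤ, y j ∈ S.odd
  indep : LinearIndependent ℂ (Sum.elim x y)
  spans : Submodule.span ℂ (Set.range x ∪ Set.range y) = ⊤
  act_Lx : ∀ i j : ℤ, S.L i (x j) = (a + (j : ℂ) + (i : ℂ) * b) • x (i + j)
  act_Ly : ∀ i j : ℤ,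
    S.L i (y j) = (a + 1 / 2 + (j : ℂ) + (i : ℂ) * (b - 1 / 2)) • y (i + j)
  act_Gx : ∀ i j : ℤ, S.G i (x j) = y (i + j)
  act_Gy : ∀ i j : ℤ,
    S.G i (y j) = (a + 1 / 2 + (j : ℂ) + (2 * (i : ℂ) + 1) * (b - 1 / 2)) • x (i + j + 1)

/-- A realization of the intermediate series module `SA'_{a,b}` (for
`0 ≤ Re a < 1`, `b ≠ 1`) inside a Neveu–Schwarz module `S` of central
charge `0`.  For `(a,b) ≠ (1/2,1/2)` this is `SA_{a,b}` itself; for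
`(a,b) = (1/2,1/2)` it is the quotient `SA_{1/2,1/2}/ℂ·y_{-1/2}`, in which
the image of `y_{-1/2}` (here `y (-1)`) is zero and the remaining vectors
form a basis.  The action formulas hold verbatim in both cases. -/
structure SA'Family (a b : ℂ) (S : NSMod 0) where
  x : ℤ → S.carrier
  y : ℤ → S.carrier
  x_even : ∀ j : ℤ, x j ∈ S.even
  y_odd : ∀ j : ℤ, y j ∈ S.odd
  spans : Submodule.span ℂ (Set.range x ∪ Set.range y) = ⊤
  indep_special : a = 1 / 2 ∧ b = 1 / 2 →
    y (-1) = 0 ∧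
      LinearIndependent ℂ (Sum.elim x (fun j : {j : ℤ // j ≠ -1} => y j.1))
  indep_generic : ¬(a = 1 / 2 ∧ b = 1 / 2) → LinearIndependent ℂ (Sum.elim x y)
  act_Lx : ∀ i j : ℤ, S.L i (x j) = (a + (j : ℂ) + (i : ℂ) * b) • x (i + j)
  act_Ly : ∀ i j : ℤ,
    S.L i (y j) = (a + 1 / 2 + (j : ℂ) + (i : ℂ) * (b - 1 / 2)) • y (i + j)
  act_Gx : ∀ i j : ℤ, S.G i (x j) = y (i + j)
  act_Gy : ∀ i j : ℤ,
    S.G i (y j) = (a + 1 / 2 + (j : ℂ) + (2 * (i : ℂ) + 1) * (b - 1 / 2)) • x (i + j + 1)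

/-- `u` is a highest weight vector of weight `(c,h)` generating the
Neveu–Schwarz module `S` (of central charge `c`). -/
structure IsHW {c : ℂ} (h : ℂ) (S : NSMod c) (u : S.carrier) : Prop where
  ne_zero : u ≠ 0
  mem_even : u ∈ S.even
  hw0 : S.L 0 u = h • u
  hwL : ∀ n : ℤ, 1 ≤ n → S.L n u = 0
  hwG : ∀ k : ℤ, 0 ≤ k → S.G k u = 0
  gen : ∀ W : Submodule ℂ S.carrier, S.IsSubmodule W → u ∈ W → W = ⊤

/-- A realization of the tensor product Neveu–Schwarz module `V ⊗ S` (with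
`V` of central charge `c` and `S` of central charge `0`) as a Neveu–Schwarz
module `T` of central charge `c`, via the bilinear map `t`. -/
structure TensorWitness {c : ℂ} (V : NSMod c) (S : NSMod 0) (T : NSMod c) where
  t : V.carrier →ₗ[ℂ] S.carrier →ₗ[ℂ] T.carrier
  isTensor : IsTensorProduct t
  grade_ee : ∀ v ∈ V.even, ∀ w ∈ S.even, t v w ∈ T.even
  grade_oo : ∀ v ∈ V.odd, ∀ w ∈ S.odd, t v w ∈ T.even
  grade_eo : ∀ v ∈ V.even, ∀ w ∈ S.odd, t v w ∈ T.odd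
  grade_oe : ∀ v ∈ V.odd, ∀ w ∈ S.even, t v w ∈ T.odd
  actL : ∀ (m : ℤ) (v : V.carrier) (w : S.carrier),
    T.L m (t v w) = t (V.L m v) w + t v (S.L m w)
  actG_even : ∀ (k : ℤ), ∀ v ∈ V.even, ∀ w : S.carrier,
    T.G k (t v w) = t (V.G k v) w + t v (S.G k w)
  actG_odd : ∀ (k : ℤ), ∀ v ∈ V.odd, ∀ w : S.carrier,
    T.G k (t v w) = t (V.G k v) w - t v (S.G k w)

/-- The PBW monomial `L_{-n₁} ⋯ L_{-n_p} G_{-r₁} ⋯ G_{-r_q} u`, where the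
second list records each half-integer `r = k - 1/2` by the integer `k`
(so that `G_{-r}` is the operator `G (-k)`). -/
def vermaMonomial {c : ℂ} (M : NSMod c) (u : M.carrier) (p : List ℤ × List ℤ) :
    M.carrier :=
  (p.1.map fun n => M.L (-n)).foldr (fun f v => f v)
    ((p.2.map fun k => M.G (-k)).foldr (fun f v => f v) u)

/-- The index set for the PBW basis of a Verma module: weakly decreasing lists
of positive integers `n₁ ≥ ⋯ ≥ n_p ≥ 1`, together with strictly decreasing
lists of positive half-integers `r₁ > ⋯ > r_q > 0` (with `r = k - 1/2`
recorded by the integer `k ≥ 1`). -/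
def VermaIndex : Type :=
  {p : List ℤ × List ℤ //
    p.1.Chain' (· ≥ ·) ∧ (∀ n ∈ p.1, 1 ≤ n) ∧
      p.2.Chain' (· > ·) ∧ (∀ k ∈ p.2, 1 ≤ k)}

/-- `M` is the Verma module of highest weight `(c,h)` with highest weight
vector `u`: the PBW monomials in the negative-mode operators applied to `u`
form a basis of `M`. -/
def IsVerma {c : ℂ} (h : ℂ) (M : NSMod c) (u : M.carrier) : Prop :=
  IsHW h M u ∧
    LinearIndependent ℂ (fun p : VermaIndex => vermaMonomial M u p.1) ∧
    Submodule.span ℂ (Set.range fun p : VermaIndex => vermaMonomial M u p.1) = ⊤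

/-- The grading assumption on a highest weight module `V` of highest weight
`(c,h)`: `V = ⨁_{n ∈ ℕ} V_{h-n/2}` where `D n = V_{h-n/2}` is the
`L₀`-eigenspace with eigenvalue `h - n/2`, contained in the even part for
`n` even and the odd part for `n` odd, and `u ∈ D 0`. -/
structure GradedHW {c : ℂ} (h : ℂ) (V : NSMod c) (u : V.carrier)
    (D : ℕ → Submodule ℂ V.carrier) : Prop where
  hw : IsHW h V u
  u_mem : u ∈ D 0
  internal : DirectSum.IsInternal D
  eig : ∀ (n : ℕ), ∀ v ∈ D n, V.L 0 v = (h - (n : ℂ) / 2) • v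
  even_part : ∀ n : ℕ, Even n → D n ≤ V.even
  odd_part : ∀ n : ℕ, Odd n → D n ≤ V.odd

/-- A realization of the shifted module `V ⊗ ℂ[t^{±1/2}]` on the graded
vector space `Sh`.  Here `ι p v` represents `v ⊗ t^{p/2}` (half-integers
`s ∈ (1/2)ℤ` are recorded by integers `p` with `s = p/2`), and `D n` is the
weight space `V_{h - n/2}` (so `d = -n/2`).  The case distinction
`s + d ∈ ℤ` versus `s + d ∈ ℤ + 1/2` becomes `2 ∣ (p - n)` versus its
negation. -/
structure ShiftedWitness (a b : ℂ) {c : ℂ} (V : NSMod c)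
    (D : ℕ → Submodule ℂ V.carrier) (Sh : PreNSMod) where
  ι : ℤ → V.carrier →ₗ[ℂ] Sh.carrier
  directSum : Function.Bijective
    (Finsupp.lsum ℂ ι : (ℤ →₀ V.carrier) →ₗ[ℂ] Sh.carrier)
  grade_even : ∀ p : ℤ, (2 : ℤ) ∣ p → ∀ v : V.carrier, ι p v ∈ Sh.even
  grade_odd : ∀ p : ℤ, ¬(2 : ℤ) ∣ p → ∀ v : V.carrier, ι p v ∈ Sh.odd
  actL : ∀ (k p : ℤ) (n : ℕ), ∀ v ∈ D n,
    Sh.L k (ι p v) = ι (p + 2 * k) (V.L k v)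
      + (if (2 : ℤ) ∣ (p - (n : ℤ))
          then a + (p : ℂ) / 2 + (k : ℂ) * b + (n : ℂ) / 2
          else a + (p : ℂ) / 2 + (k : ℂ) * (b - 1 / 2) + (n : ℂ) / 2) •
            ι (p + 2 * k) v
  actG : ∀ (k p : ℤ) (n : ℕ), ∀ v ∈ D n,
    Sh.G k (ι p v) = ι (p + 2 * k + 1) (V.G k v)
      + ((-1 : ℂ) ^ n *
          (if (2 : ℤ) ∣ (p - (n : ℤ)) then 1
            else a + (p : ℂ) / 2 + (2 * (k : ℂ) + 1) * (b - 1 / 2) + (n : ℂ) / 2)) •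
            ι (p + 2 * k + 1) v

/-- A realization of the *reduced* shifted module: the quotient of the
shifted module `V ⊗ ℂ[t^{±1/2}]` by the copy of `V` spanned by the vectors
`v ⊗ t^{d - 1/2}` (`v ∈ V_{h+d}`) when `(a,b) = (1/2,1/2)`, and the shifted
module itself otherwise. -/
structure RedShiftedWitness (a b : ℂ) {c : ℂ} (V : NSMod c)
    (D : ℕ → Submodule ℂ V.carrier) (R : NSMod c) where
  ι : ℤ → V.carrier →ₗ[ℂ] R.carrier
  surj : Function.Surjective
    (Finsupp.lsum ℂ ι : (ℤ →₀ V.carrier) →ₗ[ℂ] R.carrier)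
  ker_special : a = 1 / 2 ∧ b = 1 / 2 →
    LinearMap.ker (Finsupp.lsum ℂ ι : (ℤ →₀ V.carrier) →ₗ[ℂ] R.carrier)
      = Submodule.span ℂ
          {w : ℤ →₀ V.carrier | ∃ n : ℕ, ∃ v ∈ D n, w = Finsupp.single (-(n : ℤ) - 1) v}
  ker_generic : ¬(a = 1 / 2 ∧ b = 1 / 2) →
    LinearMap.ker (Finsupp.lsum ℂ ι : (ℤ →₀ V.carrier) →ₗ[ℂ] R.carrier) = ⊥
  grade_even : ∀ p : ℤ, (2 : ℤ) ∣ p → ∀ v : V.carrier, ι p v ∈ R.even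
  grade_odd : ∀ p : ℤ, ¬(2 : ℤ) ∣ p → ∀ v : V.carrier, ι p v ∈ R.odd
  actL : ∀ (k p : ℤ) (n : ℕ), ∀ v ∈ D n,
    R.L k (ι p v) = ι (p + 2 * k) (V.L k v)
      + (if (2 : ℤ) ∣ (p - (n : ℤ))
          then a + (p : ℂ) / 2 + (k : ℂ) * b + (n : ℂ) / 2
          else a + (p : ℂ) / 2 + (k : ℂ) * (b - 1 / 2) + (n : ℂ) / 2) •
            ι (p + 2 * k) v
  actG : ∀ (k p : ℤ) (n : ℕ), ∀ v ∈ D n,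
    R.G k (ι p v) = ι (p + 2 * k + 1) (V.G k v)
      + ((-1 : ℂ) ^ n *
          (if (2 : ℤ) ∣ (p - (n : ℤ)) then 1
            else a + (p : ℂ) / 2 + (2 * (k : ℂ) + 1) * (b - 1 / 2) + (n : ℂ) / 2)) •
            ι (p + 2 * k + 1) v

/-- `φ` is a shifted character at level `s = p/2` on the Verma module `M`
with grading `D` and highest weight vector `u`:  `φ u = 1` and `φ` satisfies
the defining recursions on homogeneous vectors (`w ∈ D n` means
`L₀ w = (h + d) w` with `d = -n/2` and `w` of parity `n mod 2`; the operator
`G (-j)` is `G_{-r}` with `r = j - 1/2 > 0`). -/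
def IsShiftedChar (a b : ℂ) {c : ℂ} (M : NSMod c)
    (D : ℕ → Submodule ℂ M.carrier) (u : M.carrier) (p : ℤ)
    (φ : M.carrier →ₗ[ℂ] ℂ) : Prop :=
  φ u = 1 ∧
    (∀ (n : ℕ), ∀ w ∈ D n, ∀ k : ℤ, 1 ≤ k →
      φ (M.L (-k) w)
        = (if (2 : ℤ) ∣ (p - (n : ℤ))
            then -(a + (p : ℂ) / 2 + (k : ℂ) - (k : ℂ) * b + (n : ℂ) / 2)
            else -(a + (p : ℂ) / 2 + (k : ℂ) - (k : ℂ) * (b - 1 / 2) + (n : ℂ) / 2))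
          * φ w) ∧
    (∀ (n : ℕ), ∀ w ∈ D n, ∀ j : ℤ, 1 ≤ j →
      φ (M.G (-j) w)
        = (if (2 : ℤ) ∣ (p - (n : ℤ))
            then -(-1 : ℂ) ^ n *
              (a + (p : ℂ) / 2 + ((j : ℂ) - 1 / 2)
                - 2 * ((j : ℂ) - 1 / 2) * (b - 1 / 2) + (n : ℂ) / 2)
            else -(-1 : ℂ) ^ n)
          * φ w)

namespace Module.Basis

variable {K M ι : Type*} [Field K] [AddCommGroup M] [Module K M]

open Polynomial in
/-- Applying `∏_{j ≠ i} (f - μ j)` to `v` kills every coordinate of `v` except a nonzero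
multiple of the `i`-th one. -/
theorem mem_of_repr_ne_zero_of_apply_eq_smul (b : Basis ι K M) {f : Module.End K M}
    {μ : ι → K} (hμ : Function.Injective μ) (hb : ∀ i, f (b i) = μ i • b i)
    {p : Submodule K M} (hp : p ≤ p.comap f) {v : M} (hv : v ∈ p) {i : ι}
    (hi : b.repr v i ≠ 0) : b i ∈ p := by
  classical
  set s := (b.repr v).support
  let P : K[X] := ∏ j ∈ s.erase i, (X - C (μ j))
  have heval : ∀ k, aeval f P (b k) = P.eval (μ k) • b k := fun k =>
    Module.End.aeval_apply_of_hasEigenvector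
      ⟨Module.End.mem_eigenspace_iff.2 (hb k), b.ne_zero k⟩
  have hPv : aeval f P v = (P.eval (μ i) * b.repr v i) • b i := by
    conv_lhs => rw [← b.linearCombination_repr v, Finsupp.linearCombination_apply, Finsupp.sum]
    rw [map_sum, Finset.sum_eq_single i]
    · rw [map_smul, heval, smul_smul, mul_comm]
    · intro k hk hki
      rw [map_smul, heval, eval_prod,
        Finset.prod_eq_zero (Finset.mem_erase.2 ⟨hki, hk⟩) (by simp), zero_smul, smul_zero]
    · exact fun h => absurd (Finsupp.mem_support_iff.2 hi) h
  have hPi : P.eval (μ i) ≠ 0 := by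
    rw [eval_prod, Finset.prod_ne_zero_iff]
    intro j hj
    simpa [sub_eq_zero] using hμ.ne (Finset.ne_of_mem_erase hj).symm
  have hmem := hPv ▸ aeval_apply_smul_mem_of_le_comap hv P f hp
  have := p.smul_mem (P.eval (μ i) * b.repr v i)⁻¹ hmem
  rwa [smul_smul, inv_mul_cancel₀ (mul_ne_zero hPi hi), one_smul] at this

theorem exists_mem_of_apply_eq_smul (b : Basis ι K M) {f : Module.End K M}
    {μ : ι → K} (hμ : Function.Injective μ) (hb : ∀ i, f (b i) = μ i • b i)
    {p : Submodule K M} (hp : p ≤ p.comap f) (hne : p ≠ ⊥) : ∃ i, b i ∈ p := by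
  obtain ⟨v, hv, hv0⟩ := p.ne_bot_iff.1 hne
  obtain ⟨i, hi⟩ : ∃ i, b.repr v i ≠ 0 := by
    by_contra! h
    exact hv0 (b.repr.injective (Finsupp.ext fun i => by simp [h i]))
  exact ⟨i, b.mem_of_repr_ne_zero_of_apply_eq_smul hμ hb hp hv hi⟩

end Module.Basis

def NSHom.ofBasis {c c' : ℂ} {S : NSMod c} {T : NSMod c'} {ι : Type*}
    (b : Module.Basis ι ℂ S.carrier) (φ : S.carrier →ₗ[ℂ] T.carrier)
    (hL : ∀ m i, φ (S.L m (b i)) = T.L m (φ (b i)))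
    (hG : ∀ k i, φ (S.G k (b i)) = T.G k (φ (b i))) : NSHom S T where
  toFun := φ
  commL m := LinearMap.congr_fun (b.ext (f₁ := φ ∘ₗ S.L m) (f₂ := T.L m ∘ₗ φ) (hL m))
  commG k := LinearMap.congr_fun (b.ext (f₁ := φ ∘ₗ S.G k) (f₂ := T.G k ∘ₗ φ) (hG k))

theorem NSMod.isSubmodule_span {c : ℂ} (S : NSMod c) {s : Set S.carrier}
    (hL : ∀ m, ∀ v ∈ s, S.L m v ∈ span ℂ s) (hG : ∀ k, ∀ v ∈ s, S.G k v ∈ span ℂ s) :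
    S.IsSubmodule (span ℂ s) :=
  ⟨fun m _ hv => span_le (p := (span ℂ s).comap (S.L m)) |>.2 (hL m) hv,
    fun k _ hv => span_le (p := (span ℂ s).comap (S.G k)) |>.2 (hG k) hv⟩

namespace SAFamily

variable {a b : ℂ} {S : NSMod 0}

def basis (F : SAFamily a b S) : Module.Basis (ℤ ⊕ ℤ) ℂ S.carrier :=
  .mk F.indep (by rw [Set.Sum.elim_range, F.spans])

@[simp]
theorem basis_inl (F : SAFamily a b S) (j : ℤ) : F.basis (Sum.inl j) = F.x j := by
  simp [basis]

@[simp]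
theorem basis_inr (F : SAFamily a b S) (j : ℤ) : F.basis (Sum.inr j) = F.y j := by
  simp [basis]

def weight (a : ℂ) : ℤ ⊕ ℤ → ℂ :=
  Sum.elim (fun j => a + j) (fun j => a + 1 / 2 + j)

theorem weight_injective (a : ℂ) : Function.Injective (weight a) := by
  have key : ∀ j k : ℤ, (j : ℂ) ≠ 1 / 2 + k := fun j k h => by
    have : ((2 * j : ℤ) : ℂ) = ((2 * k + 1 : ℤ) : ℂ) := by push_cast; linear_combination 2 * h
    have := Int.cast_injective this
    omega
  rintro (j | j) (k | k) h <;> simp only [weight, Sum.elim_inl, Sum.elim_inr] at h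
  · exact congrArg Sum.inl (by exact_mod_cast add_left_cancel h)
  · exact absurd (by linear_combination h) (key j k)
  · exact absurd (by linear_combination -h) (key k j)
  · exact congrArg Sum.inr (by exact_mod_cast add_left_cancel h)

theorem L_zero_basis (F : SAFamily a b S) (k : ℤ ⊕ ℤ) :
    S.L 0 (F.basis k) = weight a k • F.basis k := by
  rcases k with j | j
  · simp [F.act_Lx, weight]
  · simp [F.act_Ly, weight]

theorem exists_basis_mem (F : SAFamily a b S) {W : Submodule ℂ S.carrier}
    (hW : S.IsSubmodule W) (hne : W ≠ ⊥) : ∃ k, F.basis k ∈ W :=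
  F.basis.exists_mem_of_apply_eq_smul (weight_injective a) F.L_zero_basis
    (fun _ hv => hW.1 0 _ hv) hne

theorem nsIso_of_eq_add_int {a' : ℂ} {T : NSMod 0} (F : SAFamily a b S) (F' : SAFamily a' b T)
    (n : ℤ) (h : a = a' + n) : NSIso S T := by
  let e := Equiv.sumCongr (Equiv.addRight n) (Equiv.addRight n)
  let φ := F.basis.equiv F'.basis e
  have hx : ∀ j, φ (F.x j) = F'.x (j + n) := fun j => by
    rw [← basis_inl, ← basis_inl]
    exact F.basis.equiv_apply (Sum.inl j) F'.basis e
  have hy : ∀ j, φ (F.y j) = F'.y (j + n) := fun j => by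
    rw [← basis_inr, ← basis_inr]
    exact F.basis.equiv_apply (Sum.inr j) F'.basis e
  refine ⟨NSHom.ofBasis F.basis φ.toLinearMap ?_ ?_, φ.bijective⟩ <;> rintro m (j | j) <;>
    simp only [basis_inl, basis_inr, LinearEquiv.coe_coe, F.act_Lx, F.act_Ly, F.act_Gx,
      F.act_Gy, F'.act_Lx, F'.act_Ly, F'.act_Gx, F'.act_Gy, map_smul, hx, hy, h] <;>
    congr 1 <;> push_cast <;> ring_nf

section SA01

variable (F : SAFamily 0 1 S)

theorem act_Lx_zero_one (i j : ℤ) : S.L i (F.x j) = ((i + j : ℤ) : ℂ) • F.x (i + j) := by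
  rw [F.act_Lx]; push_cast; ring_nf

theorem act_Gy_zero_one (i j : ℤ) :
    S.G i (F.y j) = ((i + j + 1 : ℤ) : ℂ) • F.x (i + j + 1) := by
  rw [F.act_Gy]; push_cast; ring_nf

/-- The subspace `SA'_{0,1}`. -/
def primeSubmodule : Submodule ℂ S.carrier :=
  span ℂ (F.x '' {j | j ≠ 0} ∪ Set.range F.y)

theorem x_mem_primeSubmodule {j : ℤ} (hj : j ≠ 0) : F.x j ∈ F.primeSubmodule :=
  subset_span (Or.inl ⟨j, hj, rfl⟩)

theorem y_mem_primeSubmodule (j : ℤ) : F.y j ∈ F.primeSubmodule :=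
  subset_span (Or.inr ⟨j, rfl⟩)

theorem intCast_smul_x_mem_primeSubmodule (n : ℤ) : (n : ℂ) • F.x n ∈ F.primeSubmodule := by
  rcases eq_or_ne n 0 with rfl | hn
  · simp
  · exact smul_mem _ _ (F.x_mem_primeSubmodule hn)

theorem isSubmodule_primeSubmodule : S.IsSubmodule F.primeSubmodule := by
  refine S.isSubmodule_span ?_ ?_ <;> rintro m _ (⟨j, -, rfl⟩ | ⟨j, rfl⟩)
  · rw [F.act_Lx_zero_one]; exact F.intCast_smul_x_mem_primeSubmodule _
  · rw [F.act_Ly]; exact smul_mem _ _ (F.y_mem_primeSubmodule _)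
  · rw [F.act_Gx]; exact F.y_mem_primeSubmodule _
  · rw [F.act_Gy_zero_one]; exact F.intCast_smul_x_mem_primeSubmodule _

theorem primeSubmodule_ne_bot : F.primeSubmodule ≠ ⊥ :=
  (Submodule.ne_bot_iff _).2
    ⟨F.y 0, F.y_mem_primeSubmodule 0, by simpa using F.basis.ne_zero (Sum.inr 0)⟩

/-- `G` moves any `x j` to any `y k`, and any `y j` to any multiple `m • x m`, so a single basis
vector generates everything but `x 0`. -/
theorem primeSubmodule_le {W : Submodule ℂ S.carrier} (hW : S.IsSubmodule W) (hne : W ≠ ⊥) :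
    F.primeSubmodule ≤ W := by
  have y_of_x : ∀ j, F.x j ∈ W → ∀ k, F.y k ∈ W := fun j hj k => by
    simpa [F.act_Gx] using hW.2 (k - j) _ hj
  have x_of_y : ∀ j, F.y j ∈ W → ∀ m, m ≠ 0 → F.x m ∈ W := fun j hj m hm => by
    have := hW.2 (m - j - 1) _ hj
    rw [F.act_Gy_zero_one, show m - j - 1 + j + 1 = m by ring] at this
    simpa [hm] using W.smul_mem (m : ℂ)⁻¹ this
  have hy : ∀ k, F.y k ∈ W := by
    obtain ⟨j | j, hj⟩ := F.exists_basis_mem hW hne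
    · exact y_of_x j (by simpa using hj)
    · exact y_of_x 1 (x_of_y j (by simpa using hj) 1 one_ne_zero)
  refine span_le.2 ?_
  rintro _ (⟨j, hj, rfl⟩ | ⟨j, rfl⟩)
  exacts [x_of_y 0 (hy 0) j hj, hy j]

theorem isSimpleSubmodule_primeSubmodule : S.IsSimpleSubmodule F.primeSubmodule := by
  refine ⟨F.isSubmodule_primeSubmodule, F.primeSubmodule_ne_bot, fun W hW hle => ?_⟩
  rcases eq_or_ne W ⊥ with h | h
  exacts [Or.inl h, Or.inr (hle.antisymm (F.primeSubmodule_le hW h))]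

theorem eq_primeSubmodule_of_isSimpleSubmodule {W : Submodule ℂ S.carrier}
    (hW : S.IsSimpleSubmodule W) : W = F.primeSubmodule := by
  obtain ⟨hsub, hne, hmin⟩ := hW
  have hle := F.primeSubmodule_le hsub hne
  exact ((hmin _ F.isSubmodule_primeSubmodule hle).resolve_left F.primeSubmodule_ne_bot).symm

end SA01

end SAFamily

/-- Theorem 0.1(2), first part: for `a ∈ ℤ` one has
`SA_{a,1} ≅ SA_{0,1}`; moreover the subspace `SA'_{0,1}` of `SA_{0,1}`
spanned by `{x_j : j ≠ 0} ∪ {y_{j+1/2} : j ∈ ℤ}` is a simple submodule, and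
it is the unique simple submodule of `SA_{0,1}`. -/
theorem SA_int_iso_and_unique_simple_submodule (a : ℤ)
    (S : NSMod 0) (F : SAFamily (a : ℂ) 1 S)
    (S₀ : NSMod 0) (F₀ : SAFamily 0 1 S₀) :
    NSIso S S₀ ∧
      S₀.IsSimpleSubmodule
        (Submodule.span ℂ (F₀.x '' {j : ℤ | j ≠ 0} ∪ Set.range F₀.y)) ∧
      (∀ W : Submodule ℂ S₀.carrier, S₀.IsSimpleSubmodule W →
        W = Submodule.span ℂ (F₀.x '' {j : ℤ | j ≠ 0} ∪ Set.range F₀.y)) :=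
  ⟨F.nsIso_of_eq_add_int F₀ a (zero_add _).symm, F₀.isSimpleSubmodule_primeSubmodule,
    fun _ => F₀.eq_primeSubmodule_of_isSimpleSubmodule⟩
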